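/- arXiv:0906.3724 — 4 statements merged into one kernel-verified Lean document; each statement's English description precedes it below -/
import Mathlib

section
/- Let G be an ordered graph on [n], let B ⊆ [n] be a homogeneous block of G with |B| ≤ 2, and let v ∈ B. Then G − v does not have the same type as G. -/
namespace OrderedGraphs

/-- The order-preserving map `Fin (n-1) → Fin n` that skips the vertex `v`. -/
def delMap {n : ℕ} (v : Fin n) (i : Fin (n - 1)) : Fin n :=
  if h : (i : ℕ) < (v : ℕ) then ⟨i, lt_trans h v.isLt⟩
  else ⟨(i : ℕ) + 1, by have h1 := i.isLt; have h2 := v.isLt; omega⟩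

/-- `erase G v` is the ordered graph `G − v` on `[n-1]`, obtained by deleting `v` and
relabelling the remaining vertices order-preservingly. -/
def erase {n : ℕ} (G : SimpleGraph (Fin n)) (v : Fin n) : SimpleGraph (Fin (n - 1)) where
  Adj i j := G.Adj (delMap v i) (delMap v j)
  symm := ⟨fun i j h => G.adj_symm h⟩
  loopless := ⟨fun i h => G.irrefl h⟩

/-- The shadow `∂G` of a single ordered graph. -/
def shadow {n : ℕ} (G : SimpleGraph (Fin n)) : Set (SimpleGraph (Fin (n - 1))) :=
  {H | ∃ v : Fin n, H = erase G v}

/-- The shadow `∂𝒢` of a collection of ordered graphs. -/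
def shadowCol {n : ℕ} (𝒢 : Set (SimpleGraph (Fin n))) : Set (SimpleGraph (Fin (n - 1))) :=
  ⋃ G ∈ 𝒢, shadow G

/-- `x ∼ y` : the relation `Γ(x) \ {y} = Γ(y) \ {x}`. -/
def simRel {n : ℕ} (G : SimpleGraph (Fin n)) (x y : Fin n) : Prop :=
  G.neighborSet x \ {y} = G.neighborSet y \ {x}

/-- A set of consecutive vertices whose elements are pairwise `∼`-equivalent. -/
def IsHomInterval {n : ℕ} (G : SimpleGraph (Fin n)) (B : Set (Fin n)) : Prop :=
  B.OrdConnected ∧ ∀ x ∈ B, ∀ y ∈ B, simRel G x y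

/-- A homogeneous block: a maximal nonempty set of consecutive vertices whose elements are
pairwise `∼`-equivalent. -/
def IsHomBlock {n : ℕ} (G : SimpleGraph (Fin n)) (B : Set (Fin n)) : Prop :=
  B.Nonempty ∧ IsHomInterval G B ∧ ∀ C, IsHomInterval G C → B ⊆ C → B = C

open Classical in
/-- The excess `m(G) = Σ_{B : |B| ≥ 3} (|B| − 2)`, the sum over homogeneous blocks;
(truncated ℕ-subtraction makes blocks with `|B| ≤ 2` contribute `0`). -/
noncomputable def excess {n : ℕ} (G : SimpleGraph (Fin n)) : ℕ :=
  ∑ B ∈ Finset.univ.filter (fun B : Finset (Fin n) => IsHomBlock G ↑B), (B.card - 2)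

/-- Two ordered graphs have the same type. -/
def SameType {n n' : ℕ} (G : SimpleGraph (Fin n)) (G' : SimpleGraph (Fin n')) : Prop :=
  ∃ (k : ℕ) (B : Fin k → Set (Fin n)) (B' : Fin k → Set (Fin n')),
    (∀ i, IsHomBlock G (B i)) ∧ (∀ C, IsHomBlock G C → ∃ i, C = B i) ∧
    (∀ i j : Fin k, i < j → ∀ x ∈ B i, ∀ y ∈ B j, x < y) ∧
    (∀ i, IsHomBlock G' (B' i)) ∧ (∀ C, IsHomBlock G' C → ∃ i, C = B' i) ∧
    (∀ i j : Fin k, i < j → ∀ x ∈ B' i, ∀ y ∈ B' j, x < y) ∧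
    (∀ i j : Fin k, (∀ u ∈ B i, ∀ v ∈ B j, u ≠ v → G.Adj u v) ↔
            (∀ u ∈ B' i, ∀ v ∈ B' j, u ≠ v → G'.Adj u v)) ∧
    (∀ i, (B i).ncard = 1 ↔ (B' i).ncard = 1)

/-- The shadow within types `∂_τ G`. -/
def typeShadow {n : ℕ} (G : SimpleGraph (Fin n)) : Set (SimpleGraph (Fin (n - 1))) :=
  {H ∈ shadow G | SameType H G}

/-- The shadow within types `∂_τ 𝒢` of a collection. -/
def typeShadowCol {n : ℕ} (𝒢 : Set (SimpleGraph (Fin n))) : Set (SimpleGraph (Fin (n - 1))) :=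
  ⋃ G ∈ 𝒢, typeShadow G

/-- `Z^d(n) = {x ∈ ℤ^d : x_i ≥ 0, Σ_i x_i = n}`. -/
def Zdn (d n : ℕ) : Set (Fin d → ℤ) := {x | (∀ i, 0 ≤ x i) ∧ ∑ i, x i = (n : ℤ)}

/-- A line in `Z^d(n)`, determined by two coordinates `j, k`. -/
def ZLine (d n : ℕ) (j k : Fin d) : Set (Fin d → ℤ) :=
  {x ∈ Zdn d n | ∀ i, i ≠ j → i ≠ k → x i = 0}

/-- The shadow of a subset `A ⊆ Z^d(n)`. -/
def Zshadow (d n : ℕ) (A : Set (Fin d → ℤ)) : Set (Fin d → ℤ) :=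
  {x ∈ Zdn d (n - 1) | ∃ y ∈ A, ∀ i, x i ≤ y i}

/-- `phiAt G d x` : `x ∈ ℤ^d` is the image `φ(G)` of `G`, i.e. the homogeneous blocks of `G`
of size at least `2`, in increasing order, are `B_1 < ⋯ < B_d` and `x i = |B_i| − 2`. -/
def phiAt {n : ℕ} (G : SimpleGraph (Fin n)) (d : ℕ) (x : Fin d → ℤ) : Prop :=
  ∃ B : Fin d → Set (Fin n),
    (∀ i, IsHomBlock G (B i) ∧ 2 ≤ (B i).ncard) ∧
    (∀ C, IsHomBlock G C → 2 ≤ C.ncard → ∃ i, C = B i) ∧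
    (∀ i j : Fin d, i < j → ∀ u ∈ B i, ∀ v ∈ B j, u < v) ∧
    (∀ i, x i = ((B i).ncard : ℤ) - 2)

/-- `𝒢₀` (a set of ordered graphs of a common type, of common excess `m`) contains a line:
some subset `S ⊆ 𝒢₀` has `φ(S)` equal to a line in `Z^d(m)`. -/
def ContainsLine {n : ℕ} (𝒢₀ : Set (SimpleGraph (Fin n))) (m : ℕ) : Prop :=
  ∃ S ⊆ 𝒢₀, ∃ (d : ℕ) (j k : Fin d),
    {x : Fin d → ℤ | ∃ G ∈ S, phiAt G d x} = ZLine d m j k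

/-- `eraseSet G X` is `G − X`: delete all vertices of `X` and relabel order-preservingly. -/
noncomputable def eraseSet {n : ℕ} (G : SimpleGraph (Fin n)) (X : Finset (Fin n)) :
    SimpleGraph (Fin (n - X.card)) where
  Adj i j := G.Adj ((Xᶜ.orderIsoOfFin (by rw [Finset.card_compl, Fintype.card_fin]) i) : Fin n)
                   ((Xᶜ.orderIsoOfFin (by rw [Finset.card_compl, Fintype.card_fin]) j) : Fin n)
  symm := ⟨fun i j h => G.adj_symm h⟩
  loopless := ⟨fun i h => G.irrefl h⟩

/-- A semi-homogeneous block: a set `B` of consecutive vertices such that all vertices of `B`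
have the same neighbourhood outside `B`, and, for some `L ⊆ ℕ`, two vertices `x, y ∈ B` are
adjacent iff `|x − y| ∈ L`. -/
def IsSemiHomBlock {n : ℕ} (G : SimpleGraph (Fin n)) (B : Set (Fin n)) : Prop :=
  B.OrdConnected ∧
  (∀ x ∈ B, ∀ y ∈ B, G.neighborSet x \ B = G.neighborSet y \ B) ∧
  ∃ L : Set ℕ, ∀ x ∈ B, ∀ y ∈ B, (G.Adj x y ↔ ((x : ℤ) - (y : ℤ)).natAbs ∈ L)


/-!
Deleting a vertex `v` restricts each homogeneous block of `G` to a set of consecutive, pairwise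
`∼`-equivalent vertices of `G − v`, so every block of `G` minus `v` lies inside a single block of
`G − v`. If `G − v` and `G` had the same type, the two ordered block sequences would have the same
length, which forces the `i`-th block of `G − v` to be exactly the `i`-th block of `G` minus `v`.
For the block `B ∋ v` with `|B| ≤ 2` this trace has at most one vertex, so it is a singleton
while `B` is not (or it is empty), contradicting the matching of singleton blocks.
-/

section DelMap

variable {n : ℕ} (v : Fin n)

lemma delMap_val (i : Fin (n - 1)) :
    ((delMap v i : Fin n) : ℕ) = if (i : ℕ) < (v : ℕ) then (i : ℕ) else (i : ℕ) + 1 := by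
  unfold delMap; split_ifs <;> rfl

lemma delMap_strictMono : StrictMono (delMap v) := by
  intro i j hij
  have hi := delMap_val v i
  have hj := delMap_val v j
  rw [Fin.lt_def] at hij ⊢
  split_ifs at hi hj <;> omega

lemma delMap_ne (i : Fin (n - 1)) : delMap v i ≠ v := by
  intro h
  have hi := delMap_val v i
  rw [h] at hi
  split_ifs at hi <;> omega

end DelMap

lemma _root_.Set.ncard_preimage_lt_of_notMem_range {α β : Type*} [Finite β] {f : α → β}
    (hf : Function.Injective f) {B : Set β} {v : β} (hv : v ∈ B) (hvf : v ∉ Set.range f) :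
    (f ⁻¹' B).ncard < B.ncard :=
  calc (f ⁻¹' B).ncard ≤ (B \ {v}).ncard :=
        Set.ncard_le_ncard_of_injOn f (fun x hx => ⟨hx, fun h => hvf ⟨x, h⟩⟩) hf.injOn
    _ < B.ncard := Set.ncard_sdiff_singleton_lt_of_mem hv

section Blocks

variable {n : ℕ} {G : SimpleGraph (Fin n)}

lemma simRel_iff {x y : Fin n} :
    simRel G x y ↔ ∀ z, z ≠ x → z ≠ y → (G.Adj x z ↔ G.Adj y z) := by
  simp only [simRel, Set.ext_iff, Set.mem_sdiff, SimpleGraph.mem_neighborSet,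
    Set.mem_singleton_iff]
  refine forall_congr' fun z => ?_
  by_cases hzx : z = x
  · subst hzx; simp
  by_cases hzy : z = y
  · subst hzy; simp
  simp [hzx, hzy]

lemma simRel_trans {x p y : Fin n} (hxp : simRel G x p) (hpy : simRel G p y) :
    simRel G x y := by
  by_cases hx : x = p; · exact hx ▸ hpy
  by_cases hy : p = y; · exact hy ▸ hxp
  by_cases hxy : x = y; · exact hxy ▸ rfl
  rw [simRel_iff] at *
  intro z hzx hzy
  by_cases hz : z = p
  · subst hz
    calc G.Adj x z ↔ G.Adj y x := G.adj_comm x z |>.trans (hpy x hx hxy)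
      _ ↔ G.Adj z y := G.adj_comm y x |>.trans (hxp y (Ne.symm hxy) (Ne.symm hy))
      _ ↔ G.Adj y z := G.adj_comm z y
  · exact (hxp z hzx hz).trans (hpy z hz hzy)

lemma _root_.Set.OrdConnected.union_of_mem {α : Type*} [LinearOrder α] {C D : Set α}
    (hC : C.OrdConnected) (hD : D.OrdConnected) {p : α} (hpC : p ∈ C) (hpD : p ∈ D) :
    (C ∪ D).OrdConnected := by
  refine ⟨fun x hx y hy z hz => ?_⟩
  rcases le_total z p with hzp | hpz
  · rcases hx with hx | hx
    · exact Or.inl (hC.out hx hpC ⟨hz.1, hzp⟩)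
    · exact Or.inr (hD.out hx hpD ⟨hz.1, hzp⟩)
  · rcases hy with hy | hy
    · exact Or.inl (hC.out hpC hy ⟨hpz, hz.2⟩)
    · exact Or.inr (hD.out hpD hy ⟨hpz, hz.2⟩)

lemma IsHomInterval.union_of_mem {C D : Set (Fin n)} (hC : IsHomInterval G C)
    (hD : IsHomInterval G D) {p : Fin n} (hpC : p ∈ C) (hpD : p ∈ D) :
    IsHomInterval G (C ∪ D) := by
  refine ⟨hC.1.union_of_mem hD.1 hpC hpD, fun x hx y hy => ?_⟩
  have hxp : simRel G x p := hx.elim (hC.2 x · p hpC) (hD.2 x · p hpD)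
  have hpy : simRel G p y := hy.elim (hC.2 p hpC y ·) (hD.2 p hpD y ·)
  exact simRel_trans hxp hpy

lemma IsHomBlock.subset_of_mem {B C : Set (Fin n)} (hB : IsHomBlock G B)
    (hC : IsHomInterval G C) {p : Fin n} (hpB : p ∈ B) (hpC : p ∈ C) : C ⊆ B := by
  rw [hB.2.2 (B ∪ C) (hB.2.1.union_of_mem hC hpB hpC) Set.subset_union_left]
  exact Set.subset_union_right

lemma exists_isHomBlock_mem (G : SimpleGraph (Fin n)) (x : Fin n) :
    ∃ B, IsHomBlock G B ∧ x ∈ B := by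
  have hx : IsHomInterval G {x} :=
    ⟨Set.ordConnected_singleton, by rintro a rfl b rfl; exact rfl⟩
  obtain ⟨M, ⟨hM, hxM⟩, hMmax⟩ :=
    Set.Finite.exists_maximalFor id {C | IsHomInterval G C ∧ x ∈ C} (Set.toFinite _)
      ⟨{x}, hx, rfl⟩
  exact ⟨M, ⟨⟨x, hxM⟩, hM, fun C hC hMC => le_antisymm hMC (hMmax ⟨hC, hMC hxM⟩ hMC)⟩, hxM⟩

lemma simRel_erase {v : Fin n} {i j : Fin (n - 1)} (h : simRel G (delMap v i) (delMap v j)) :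
    simRel (erase G v) i j := by
  rw [simRel_iff] at h ⊢
  intro z hzi hzj
  exact h (delMap v z) ((delMap_strictMono v).injective.ne hzi)
    ((delMap_strictMono v).injective.ne hzj)

lemma IsHomInterval.preimage_delMap (v : Fin n) {C : Set (Fin n)} (hC : IsHomInterval G C) :
    IsHomInterval (erase G v) (delMap v ⁻¹' C) :=
  ⟨hC.1.preimage_mono (delMap_strictMono v).monotone,
    fun _ hx _ hy => simRel_erase (hC.2 _ hx _ hy)⟩

end Blocks

section OrderedPartitions

variable {α β : Type*} [LinearOrder α] [LinearOrder β] {k : ℕ}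

lemma eq_of_mem_of_ordered {A : Fin k → Set α}
    (hA : ∀ i j, i < j → ∀ x ∈ A i, ∀ y ∈ A j, x < y)
    {i j : Fin k} {x : α} (hi : x ∈ A i) (hj : x ∈ A j) : i = j :=
  le_antisymm (not_lt.1 fun h => (hA j i h x hj x hi).false)
    (not_lt.1 fun h => (hA i j h x hi x hj).false)

/-- Sending each `A j` to the `A'`-piece containing the image of one of its points gives a strictly
monotone self-map of `Fin k`, hence the identity. -/
lemma eq_preimage_of_refines {f : α → β} (hf : StrictMono f) {A : Fin k → Set α}
    {A' : Fin k → Set β} (hA_ne : ∀ i, (A i).Nonempty)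
    (hA : ∀ i j, i < j → ∀ x ∈ A i, ∀ y ∈ A j, x < y)
    (hA' : ∀ i j, i < j → ∀ x ∈ A' i, ∀ y ∈ A' j, x < y)
    (hcover : ∀ x, ∃ i, f x ∈ A' i)
    (hrefine : ∀ i j x, x ∈ A j → f x ∈ A' i → f ⁻¹' A' i ⊆ A j) (i : Fin k) :
    A i = f ⁻¹' A' i := by
  choose pick hpick using hA_ne
  choose c hc using hcover
  set g : Fin k → Fin k := fun i => c (pick i)
  have hg_sub (i : Fin k) : f ⁻¹' A' (g i) ⊆ A i := hrefine _ _ _ (hpick i) (hc _)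
  have hg_inj : g.Injective := fun i j hij =>
    eq_of_mem_of_ordered hA (hg_sub i (by rw [Set.mem_preimage, hij]; exact hc _)) (hpick j)
  have hg_mono : StrictMono g := fun i j hij => by
    rcases lt_trichotomy (g i) (g j) with h | h | h
    · exact h
    · exact absurd (hg_inj h) hij.ne
    · exact absurd (hf (hA i j hij _ (hpick i) _ (hpick j)))
        (hA' _ _ h _ (hc (pick j)) _ (hc (pick i))).not_gt
  have hc_eq {x : α} (hx : x ∈ A i) : c x = i := by
    have hgc : c (pick (c x)) = c x := hg_mono.apply_eq
    have hpick_mem : pick (c x) ∈ f ⁻¹' A' (c x) := by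
      have h := hc (pick (c x))
      rwa [hgc] at h
    exact eq_of_mem_of_ordered hA (hpick (c x)) (hrefine _ _ _ hx (hc x) hpick_mem)
  refine Set.Subset.antisymm (fun x hx => hc_eq hx ▸ hc x) ?_
  simpa only [g, hg_mono.apply_eq] using hg_sub i

end OrderedPartitions

/-- **Observation (type changes).** If `B` is a homogeneous block of `G` of size at most `2`
and `v ∈ B`, then `G − v` does not have the same type as `G`. -/
theorem type_changes (n : ℕ) (G : SimpleGraph (Fin n)) (B : Set (Fin n))
    (hB : IsHomBlock G B) (hBcard : B.ncard ≤ 2) (v : Fin n) (hv : v ∈ B) :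
    ¬ SameType (erase G v) G := by
  rintro ⟨k, A, A', hA, -, hA_ord, hA', hA'_all, hA'_ord, -, hsingle⟩
  obtain ⟨i, rfl⟩ := hA'_all B hB
  have hcover (x : Fin (n - 1)) : ∃ j, delMap v x ∈ A' j := by
    obtain ⟨C, hC, hxC⟩ := exists_isHomBlock_mem G (delMap v x)
    obtain ⟨j, rfl⟩ := hA'_all C hC
    exact ⟨j, hxC⟩
  have hA_eq : A i = delMap v ⁻¹' A' i :=
    eq_preimage_of_refines (delMap_strictMono v) (fun j => (hA j).1) hA_ord hA'_ord hcover
      (fun j j' x hx hfx => (hA j').subset_of_mem ((hA' j).2.1.preimage_delMap v) hx hfx) i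
  have hlt : (A i).ncard < (A' i).ncard := hA_eq ▸
    Set.ncard_preimage_lt_of_notMem_range (delMap_strictMono v).injective hv
      (fun ⟨x, hx⟩ => delMap_ne v x hx)
  have hpos : 0 < (A i).ncard := (Set.ncard_pos).2 (hA i).1
  have hsingle_i := hsingle i
  omega

end OrderedGraphs
end

section
/- Let G be an ordered graph on [n] and let a, b, c ∈ [n] with a < b < c. If G − a = G − b = G − c, then the interval [a,c] = {w : a ≤ w ≤ c} is homogeneous in G, i.e. all its vertices are pairwise ∼-equivalent (so [a,c] is contained in a single homogeneous block of G). -/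
/-!
If `a < b` and `G − a = G − b`, the order isomorphism `[n] ∖ {a} → [n] ∖ {b}`, which sends
`w + 1 ↦ w` on `(a, b]` and fixes every other vertex, preserves adjacency. Hence every vertex
outside `[a, b]` sees all of `[a, b]` alike, and adjacency inside `[a, b]` depends only on the
distance of the two vertices. Apply this to `[a, b]` and `[b, c]`. For `u ∈ [a, b]` and
`v ∈ [b, c]`, each of `u, v` lies outside the other interval, so the pair `u v` can be slid to
`a c`; together with the translation invariance this gives every pair in `[a, c]` the adjacency
of `a c`, and every outside vertex sees `[a, b]` and `[b, c]`, hence `[a, c]`, alike.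
-/

namespace OrderedGraphs

def skip (v i : ℕ) : ℕ := if i < v then i else i + 1

lemma skip_of_lt {v i : ℕ} (h : i < v) : skip v i = i := if_pos h

lemma skip_of_le {v i : ℕ} (h : v ≤ i) : skip v i = i + 1 := if_neg (Nat.not_lt.mpr h)

lemma val_delMap {n : ℕ} (v : Fin n) (i : Fin (n - 1)) : (delMap v i : ℕ) = skip v i := by
  unfold delMap skip
  split_ifs <;> rfl

/-- `G` with its vertices viewed as natural numbers, so that vertex arithmetic needs no bounds. -/
def valGraph {n : ℕ} (G : SimpleGraph (Fin n)) : SimpleGraph ℕ := G.map Fin.valEmbedding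

section
variable {n : ℕ} {G : SimpleGraph (Fin n)}

@[simp]
lemma valGraph_adj {u v : Fin n} : (valGraph G).Adj u v ↔ G.Adj u v :=
  SimpleGraph.map_adj_apply (f := Fin.valEmbedding)

lemma simRel_of_forall_adj_iff {x y : Fin n}
    (h : ∀ z, z ≠ x → z ≠ y → (G.Adj x z ↔ G.Adj y z)) : simRel G x y := by
  ext z
  simp only [Set.mem_sdiff, SimpleGraph.mem_neighborSet, Set.mem_singleton_iff]
  constructor
  · rintro ⟨hxz, hzy⟩
    exact ⟨(h z hxz.ne.symm hzy).mp hxz, hxz.ne.symm⟩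
  · rintro ⟨hyz, hzx⟩
    exact ⟨(h z hzx hyz.ne.symm).mpr hyz, hyz.ne.symm⟩

variable {a b : Fin n}

lemma valGraph_adj_skip_iff_of_erase_eq (h : erase G a = erase G b) {i j : ℕ}
    (hi : i < n - 1) (hj : j < n - 1) :
    (valGraph G).Adj (skip a i) (skip a j) ↔ (valGraph G).Adj (skip b i) (skip b j) := by
  have key : G.Adj (delMap a ⟨i, hi⟩) (delMap a ⟨j, hj⟩) ↔
      G.Adj (delMap b ⟨i, hi⟩) (delMap b ⟨j, hj⟩) := by
    change (erase G a).Adj _ _ ↔ (erase G b).Adj _ _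
    rw [h]
  simpa only [← valGraph_adj, val_delMap] using key

lemma exists_skip_eq_of_not_mem_Icc (hab : a < b) {u : ℕ} (hu : u < n)
    (hout : u < a ∨ b < u) : ∃ i < n - 1, skip a i = u ∧ skip b i = u := by
  have hb := b.isLt
  rcases hout with hua | hbu
  · exact ⟨u, by omega, skip_of_lt hua, skip_of_lt (hua.trans hab)⟩
  · obtain ⟨i, rfl⟩ : ∃ i, u = i + 1 := ⟨u - 1, by omega⟩
    exact ⟨i, by omega, skip_of_le (by omega), skip_of_le (by omega)⟩

lemma valGraph_adj_succ_right_iff (hab : a < b) (h : erase G a = erase G b) {u w : ℕ}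
    (hu : u < n) (hout : u < a ∨ b < u) (haw : a ≤ w) (hwb : w < b) :
    (valGraph G).Adj u (w + 1) ↔ (valGraph G).Adj u w := by
  obtain ⟨i, hi, hia, hib⟩ := exists_skip_eq_of_not_mem_Icc hab hu hout
  have := valGraph_adj_skip_iff_of_erase_eq h hi (j := w) (by have := b.isLt; omega)
  rwa [hia, hib, skip_of_le haw, skip_of_lt hwb] at this

lemma valGraph_adj_succ_succ_iff (h : erase G a = erase G b) {w w' : ℕ}
    (haw : a ≤ w) (hwb : w < b) (haw' : a ≤ w') (hw'b : w' < b) :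
    (valGraph G).Adj (w + 1) (w' + 1) ↔ (valGraph G).Adj w w' := by
  have hb := b.isLt
  have := valGraph_adj_skip_iff_of_erase_eq h (i := w) (j := w') (by omega) (by omega)
  rwa [skip_of_le haw, skip_of_le haw', skip_of_lt hwb, skip_of_lt hw'b] at this

lemma valGraph_adj_congr_right_of_not_mem_Icc (hab : a < b) (h : erase G a = erase G b)
    {u v v' : ℕ} (hu : u < n) (hout : u < a ∨ b < u) (hv : v ∈ Set.Icc (a : ℕ) b)
    (hv' : v' ∈ Set.Icc (a : ℕ) b) :
    (valGraph G).Adj u v ↔ (valGraph G).Adj u v' := by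
  have adj_iff_adj_left :
      ∀ v, (a : ℕ) ≤ v → v ≤ b → ((valGraph G).Adj u v ↔ (valGraph G).Adj u a) := by
    intro v hav
    induction v, hav using Nat.le_induction with
    | base => exact fun _ => Iff.rfl
    | succ w haw ih =>
      intro hwb
      rw [valGraph_adj_succ_right_iff hab h hu hout haw hwb, ih (Nat.le_of_succ_le hwb)]
  rw [adj_iff_adj_left v hv.1 hv.2, adj_iff_adj_left v' hv'.1 hv'.2]

lemma valGraph_adj_add_add_iff (h : erase G a = erase G b) {u v : ℕ} (hau : a ≤ u)
    (hav : a ≤ v) {k : ℕ} (huk : u + k ≤ b) (hvk : v + k ≤ b) :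
    (valGraph G).Adj (u + k) (v + k) ↔ (valGraph G).Adj u v := by
  induction k with
  | zero => rfl
  | succ k ih =>
    rw [← add_assoc, ← add_assoc, valGraph_adj_succ_succ_iff h (by omega) (by omega) (by omega)
      (by omega), ih (by omega) (by omega)]

variable {c : Fin n}

lemma valGraph_adj_iff_of_mem_Icc_of_mem_Icc (hab : a < b) (hbc : b < c)
    (h₁ : erase G a = erase G b) (h₂ : erase G b = erase G c) {u v : ℕ}
    (hu : u ∈ Set.Icc (a : ℕ) b) (hv : v ∈ Set.Icc (b : ℕ) c) (huv : u ≠ v) :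
    (valGraph G).Adj u v ↔ (valGraph G).Adj a c := by
  have hab' : (a : ℕ) < b := hab
  have hbc' : (b : ℕ) < c := hbc
  have hc := c.isLt
  rcases hu.2.lt_or_eq with hub | rfl
  · calc (valGraph G).Adj u v
        ↔ (valGraph G).Adj u c :=
          valGraph_adj_congr_right_of_not_mem_Icc hbc h₂ (by omega) (.inl hub) hv
            ⟨hbc.le, le_rfl⟩
      _ ↔ (valGraph G).Adj c u := SimpleGraph.adj_comm _ _ _
      _ ↔ (valGraph G).Adj c a :=
          valGraph_adj_congr_right_of_not_mem_Icc hab h₁ hc (.inr hbc) hu ⟨le_rfl, hab.le⟩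
      _ ↔ (valGraph G).Adj a c := SimpleGraph.adj_comm _ _ _
  · have hbv : (b : ℕ) < v := lt_of_le_of_ne hv.1 huv
    calc (valGraph G).Adj b v
        ↔ (valGraph G).Adj v b := SimpleGraph.adj_comm _ _ _
      _ ↔ (valGraph G).Adj v a :=
          valGraph_adj_congr_right_of_not_mem_Icc hab h₁ (hv.2.trans_lt hc) (.inr hbv)
            ⟨hab.le, le_rfl⟩ ⟨le_rfl, hab.le⟩
      _ ↔ (valGraph G).Adj a v := SimpleGraph.adj_comm _ _ _
      _ ↔ (valGraph G).Adj a c :=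
          valGraph_adj_congr_right_of_not_mem_Icc hbc h₂ (by omega) (.inl hab) hv
            ⟨hbc.le, le_rfl⟩

lemma valGraph_adj_iff_of_mem_Icc (hab : a < b) (hbc : b < c)
    (h₁ : erase G a = erase G b) (h₂ : erase G b = erase G c) {u v : ℕ}
    (hu : u ∈ Set.Icc (a : ℕ) c) (hv : v ∈ Set.Icc (a : ℕ) c) (huv : u ≠ v) :
    (valGraph G).Adj u v ↔ (valGraph G).Adj a c := by
  wlog hlt : u < v generalizing u v
  · rw [SimpleGraph.adj_comm]
    exact this hv hu huv.symm (by omega)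
  obtain ⟨hau, huc⟩ := hu
  obtain ⟨hav, hvc⟩ := hv
  have hab' : (a : ℕ) < b := hab
  have hbc' : (b : ℕ) < c := hbc
  rcases le_or_gt v b with hvb | hbv
  · have htrans := valGraph_adj_add_add_iff h₁ hau hav (k := b - v) (by omega) (by omega)
    rw [show v + (b - v) = b by omega] at htrans
    rw [← htrans]
    exact valGraph_adj_iff_of_mem_Icc_of_mem_Icc hab hbc h₁ h₂ ⟨by omega, by omega⟩
      ⟨le_rfl, hbc.le⟩ (by omega)
  rcases le_or_gt (b : ℕ) u with hbu | hub
  · have htrans := valGraph_adj_add_add_iff h₂ (u := b) (v := v - (u - b)) le_rfl (by omega)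
      (k := u - b) (by omega) (by omega)
    rw [show (b : ℕ) + (u - b) = u by omega, show v - (u - b) + (u - b) = v by omega] at htrans
    rw [htrans]
    exact valGraph_adj_iff_of_mem_Icc_of_mem_Icc hab hbc h₁ h₂ ⟨hab.le, le_rfl⟩
      ⟨by omega, by omega⟩ (by omega)
  · exact valGraph_adj_iff_of_mem_Icc_of_mem_Icc hab hbc h₁ h₂ ⟨hau, hub.le⟩ ⟨hbv.le, hvc⟩
      huv

lemma valGraph_adj_congr_right_of_not_mem_Icc_of_lt_of_lt (hab : a < b) (hbc : b < c)
    (h₁ : erase G a = erase G b) (h₂ : erase G b = erase G c) {z u v : ℕ} (hz : z < n)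
    (hout : z < a ∨ c < z) (hu : u ∈ Set.Icc (a : ℕ) c) (hv : v ∈ Set.Icc (a : ℕ) c) :
    (valGraph G).Adj z u ↔ (valGraph G).Adj z v := by
  have hab' : (a : ℕ) < b := hab
  have hbc' : (b : ℕ) < c := hbc
  have adj_iff_adj_b :
      ∀ u ∈ Set.Icc (a : ℕ) c, ((valGraph G).Adj z u ↔ (valGraph G).Adj z b) := by
    intro u hu
    rcases le_total u b with hub | hbu
    · exact valGraph_adj_congr_right_of_not_mem_Icc hab h₁ hz (by omega) ⟨hu.1, hub⟩
        ⟨hab.le, le_rfl⟩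
    · exact valGraph_adj_congr_right_of_not_mem_Icc hbc h₂ hz (by omega) ⟨hbu, hu.2⟩
        ⟨le_rfl, hbc.le⟩
  rw [adj_iff_adj_b u hu, adj_iff_adj_b v hv]

end

/-- **Lemma (three's a crowd).** If `a < b < c` and `G − a = G − b = G − c`, then the
interval `[a, c]` is homogeneous in `G` (all its vertices are pairwise `∼`-equivalent). -/
theorem threes_a_crowd (n : ℕ) (G : SimpleGraph (Fin n)) (a b c : Fin n)
    (hab : a < b) (hbc : b < c)
    (h₁ : erase G a = erase G b) (h₂ : erase G b = erase G c) :
    ∀ x ∈ Set.Icc a c, ∀ y ∈ Set.Icc a c, simRel G x y := by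
  intro x hx y hy
  refine simRel_of_forall_adj_iff fun z hzx hzy => ?_
  rw [← valGraph_adj, ← valGraph_adj]
  by_cases hz : z ∈ Set.Icc a c
  · rw [valGraph_adj_iff_of_mem_Icc hab hbc h₁ h₂ hx hz (Fin.val_ne_of_ne hzx.symm),
      valGraph_adj_iff_of_mem_Icc hab hbc h₁ h₂ hy hz (Fin.val_ne_of_ne hzy.symm)]
  · rw [SimpleGraph.adj_comm _ (x : ℕ), SimpleGraph.adj_comm _ (y : ℕ)]
    have hout : (z : ℕ) < a ∨ (c : ℕ) < z := by
      simpa only [Set.mem_Icc, not_and_or, not_le, Fin.lt_def] using hz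
    exact valGraph_adj_congr_right_of_not_mem_Icc_of_lt_of_lt hab hbc h₁ h₂ z.isLt hout hx hy

end OrderedGraphs
end

section
/- Let G and H be ordered graphs on [n], and let a, b ∈ [n] with a ≤ b. If G − a = H − b, then every edge in the symmetric difference E(G) △ E(H) has at least one endpoint in the interval [a,b] = {w : a ≤ w ≤ b}. -/
namespace OrderedGraphs

/-!
When `a ≤ b`, a vertex outside `[a, b]` gets the same label in `G − a` and in `H − b`, so
`G − a = H − b` forces `G` and `H` to agree on every pair with both ends outside `[a, b]`.
-/

theorem val_delMap_of_lt {n : ℕ} {v : Fin n} {k : Fin (n - 1)} (hk : (k : ℕ) < v) :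
    (delMap v k : ℕ) = k := by
  simp [delMap, hk]

theorem val_delMap_of_le {n : ℕ} {v : Fin n} {k : Fin (n - 1)} (hk : (v : ℕ) ≤ k) :
    (delMap v k : ℕ) = k + 1 := by
  simp [delMap, Nat.not_lt.mpr hk]

theorem erase_adj {n : ℕ} (G : SimpleGraph (Fin n)) (v : Fin n) (k l : Fin (n - 1)) :
    (erase G v).Adj k l ↔ G.Adj (delMap v k) (delMap v l) :=
  Iff.rfl

theorem exists_delMap_eq_delMap_eq {n : ℕ} {a b w : Fin n} (hab : a ≤ b) (hw : w ∉ Set.Icc a b) :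
    ∃ k : Fin (n - 1), delMap a k = w ∧ delMap b k = w := by
  have hab : (a : ℕ) ≤ b := hab
  rcases not_and_or.mp hw with hwa | hbw
  · have hwa : (w : ℕ) < a := Fin.lt_def.mp (not_le.mp hwa)
    refine ⟨⟨w, by omega⟩, Fin.ext ?_, Fin.ext ?_⟩
    · exact val_delMap_of_lt hwa
    · exact val_delMap_of_lt (show (w : ℕ) < b by omega)
  · have hbw : (b : ℕ) < w := Fin.lt_def.mp (not_le.mp hbw)
    refine ⟨⟨w - 1, by omega⟩, Fin.ext ?_, Fin.ext ?_⟩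
    · rw [val_delMap_of_le (show (a : ℕ) ≤ w - 1 by omega)]; exact Nat.sub_add_cancel (by omega)
    · rw [val_delMap_of_le (show (b : ℕ) ≤ w - 1 by omega)]; exact Nat.sub_add_cancel (by omega)

/-- **Observation.** If `a ≤ b` and `G − a = H − b`, then every edge of the symmetric
difference `E(G) △ E(H)` has an endpoint in `[a, b]`. -/
theorem symmDiff_endpoint (n : ℕ) (G H : SimpleGraph (Fin n)) (a b : Fin n) (hab : a ≤ b)
    (h : erase G a = erase H b) :
    ∀ i j : Fin n, ¬ (G.Adj i j ↔ H.Adj i j) → i ∈ Set.Icc a b ∨ j ∈ Set.Icc a b := by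
  intro i j hne
  by_contra! hout
  obtain ⟨k, hka, hkb⟩ := exists_delMap_eq_delMap_eq hab hout.1
  obtain ⟨l, hla, hlb⟩ := exists_delMap_eq_delMap_eq hab hout.2
  apply hne
  calc G.Adj i j ↔ (erase G a).Adj k l := by rw [erase_adj, hka, hla]
    _ ↔ (erase H b).Adj k l := by rw [h]
    _ ↔ H.Adj i j := by rw [erase_adj, hkb, hlb]

end OrderedGraphs
end

section
/- Let G be a simple graph on n ≥ 1 vertices each of whose connected components is a clique (i.e. the adjacency relation is transitive: any two distinct vertices in the same connected component are adjacent). Then the number of connected components of G is at least n²/(n + 2e(G)), where e(G) is the number of edges of G, as an inequality of real numbers. -/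
/-! When every component is a clique, the closed neighbourhood of `v` is its component `C(v)`,
so `n + 2e = Σ_v (deg v + 1) = Σ_v |C(v)| = Σ_C |C|²`, and Cauchy–Schwarz gives
`n² = (Σ_C |C|)² ≤ k · Σ_C |C|²` for `k` components. -/

open Finset

theorem sq_card_le_card_mul_sum_card_fiber {α β : Type*} [Fintype α] [Fintype β]
    [DecidableEq β] (f : α → β) :
    Fintype.card α ^ 2 ≤ Fintype.card β * ∑ a, #{a' | f a' = f a} := by
  have hfiber : ∑ a, #{a' | f a' = f a} = ∑ b, #{a | f a = b} ^ 2 := by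
    rw [← sum_fiberwise univ f]
    refine sum_congr rfl fun b _ => ?_
    rw [sum_congr rfl fun a ha => by rw [(mem_filter.1 ha).2], sum_const, smul_eq_mul, sq]
  calc Fintype.card α ^ 2 = (∑ b, #{a | f a = b}) ^ 2 := by
        rw [← card_eq_sum_card_fiberwise fun a _ => mem_univ (f a), card_univ]
    _ ≤ Fintype.card β * ∑ b, #{a | f a = b} ^ 2 := sq_sum_le_card_mul_sum_sq
    _ = Fintype.card β * ∑ a, #{a' | f a' = f a} := by rw [hfiber]

namespace SimpleGraph

variable {V : Type*} [Fintype V] {G : SimpleGraph V} [DecidableRel G.Adj]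

theorem card_connectedComponentMk_fiber_eq_degree_add_one [DecidableEq V]
    [DecidableEq G.ConnectedComponent]
    (hclique : ∀ u v : V, u ≠ v → G.Reachable u v → G.Adj u v) (v : V) :
    #{u | G.connectedComponentMk u = G.connectedComponentMk v} = G.degree v + 1 := by
  have hfiber : ({u | G.connectedComponentMk u = G.connectedComponentMk v} : Finset V) =
      insert v (G.neighborFinset v) := by
    ext u
    simp only [mem_filter, mem_univ, true_and, mem_insert, mem_neighborFinset,
      ConnectedComponent.eq]
    refine ⟨fun h => or_iff_not_imp_left.2 fun hne => (hclique u v hne h).symm, ?_⟩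
    rintro (rfl | hadj)
    exacts [Reachable.refl u, hadj.reachable.symm]
  rw [hfiber, card_insert_of_notMem (notMem_neighborFinset_self G v),
    card_neighborFinset_eq_degree]

theorem card_add_two_mul_card_edgeFinset :
    Fintype.card V + 2 * #G.edgeFinset = ∑ v, (G.degree v + 1) := by
  rw [← sum_degrees_eq_twice_card_edges, sum_add_distrib, sum_const, card_univ, smul_eq_mul,
    mul_one, add_comm]

end SimpleGraph

namespace OrderedGraphs

theorem cliques_components_general {V : Type*} [Fintype V] (G : SimpleGraph V)
    (hclique : ∀ u v : V, u ≠ v → G.Reachable u v → G.Adj u v) :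
    ((Fintype.card V : ℝ)) ^ 2 / ((Fintype.card V : ℝ) + 2 * (G.edgeSet.ncard : ℝ)) ≤
      (Nat.card G.ConnectedComponent : ℝ) := by
  classical
  have hcount : Fintype.card V ^ 2 ≤
      Fintype.card G.ConnectedComponent * (Fintype.card V + 2 * #G.edgeFinset) := by
    simpa only [G.card_connectedComponentMk_fiber_eq_degree_add_one hclique,
      ← G.card_add_two_mul_card_edgeFinset] using
      sq_card_le_card_mul_sum_card_fiber G.connectedComponentMk
  rw [← SimpleGraph.coe_edgeFinset, Set.ncard_coe_finset, Nat.card_eq_fintype_card]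
  exact div_le_of_le_mul₀ (by positivity) (by positivity) (by exact_mod_cast hcount)

/-- **Lemma (unions of cliques).** If every connected component of `G` is a clique
(the adjacency relation is transitive on components), then `G` has at least
`n² / (n + 2e(G))` components. -/
theorem cliques_components {V : Type*} [Fintype V] (G : SimpleGraph V)
    (hn : 1 ≤ Fintype.card V)
    (hclique : ∀ u v : V, u ≠ v → G.Reachable u v → G.Adj u v) :
    ((Fintype.card V : ℝ)) ^ 2 / ((Fintype.card V : ℝ) + 2 * (G.edgeSet.ncard : ℝ)) ≤
      (Nat.card G.ConnectedComponent : ℝ) :=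
  cliques_components_general G hclique

end OrderedGraphs
end
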